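/- arXiv:1801.08059 — 2 statements merged into one kernel-verified Lean document; each statement's English description precedes it below -/
import Mathlib

section
/- Let G_n over F_q be as above (recursive 2×2 block construction with nonzero multipliers) and let A ⊆ {1,…,n} be a nonempty index set. Consider the linear code C = { u G_n : u ∈ F_q^n, u_i = 0 for all i ∉ A }. Then the minimum symbol-wise Hamming distance of C equals min_{i ∈ A} 2^{wt(i−1)}. -/
/-- The 2×2 polarization kernel `[[1,0],[β,1]]` over a field. -/
def kern {F : Type} [Field F] (β : F) : Matrix (Fin 2) (Fin 2) F := !![1, 0; β, 1]

/-- The recursively-defined polar transform matrix `G_{2^r}` over `F_q`: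
`G_1 = [1]` and `G_{2^{r+1}} = [[G_{2^r}, 0], [β_{r+1} G_{2^r}, G_{2^r}]]`. -/
def polarG {F : Type} [Field F] (β : ℕ → F) : (r : ℕ) → Matrix (Fin (2 ^ r)) (Fin (2 ^ r)) F
  | 0 => 1
  | r + 1 => Matrix.of fun i j =>
      kern (β (r + 1))
          ⟨i.val / 2 ^ r, by
            exact Nat.div_lt_of_lt_mul (by rw [← pow_succ]; exact i.isLt)⟩
          ⟨j.val / 2 ^ r, by
            exact Nat.div_lt_of_lt_mul (by rw [← pow_succ]; exact j.isLt)⟩ *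
        polarG β r ⟨i.val % 2 ^ r, Nat.mod_lt _ (pow_pos (by norm_num) r)⟩
          ⟨j.val % 2 ^ r, Nat.mod_lt _ (pow_pos (by norm_num) r)⟩
/-- Number of ones in the binary expansion of `k`. -/
def wt (k : ℕ) : ℕ := (Nat.digits 2 k).sum

section Aux

open Classical

lemma wt_div2 (n : ℕ) : wt n = n % 2 + wt (n / 2) := by
  cases n with
  | zero => simp [wt]
  | succ m =>
    rw [wt, Nat.digits_def' (by norm_num : 1 < 2) (Nat.succ_pos m)]
    simp [wt, Nat.add_comm]

lemma pow_succ_split (r : ℕ) : (2:ℕ)^(r+1) = 2^r + 2^r := by rw [pow_succ]; ring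

lemma wt_two_pow_add : ∀ (r m : ℕ), m < 2^r → wt (2^r + m) = wt m + 1 := by
  intro r
  induction r with
  | zero =>
    intro m hm
    have : m = 0 := by omega
    subst this
    show wt 1 = wt 0 + 1
    rw [wt_div2 1]; simp [wt]
  | succ r ih =>
    intro m hm
    have e := pow_succ_split r
    have h2 : m / 2 < 2 ^ r := by omega
    have e1 : (2^(r+1)+m) % 2 = m % 2 := by omega
    have e2 : (2^(r+1)+m) / 2 = 2^r + m/2 := by omega
    rw [wt_div2 (2^(r+1)+m), wt_div2 m, e1, e2, ih _ h2]
    omega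

/-- Low-half embedding `Fin (2^r) → Fin (2^(r+1))`. -/
def lo (r : ℕ) (m : Fin (2^r)) : Fin (2^(r+1)) :=
  ⟨m.val, by have := m.isLt; have := pow_succ_split r; omega⟩

/-- High-half embedding `Fin (2^r) → Fin (2^(r+1))`. -/
def hi (r : ℕ) (m : Fin (2^r)) : Fin (2^(r+1)) :=
  ⟨2^r + m.val, by have := m.isLt; have := pow_succ_split r; omega⟩

lemma lo_or_hi (r : ℕ) (k : Fin (2^(r+1))) : (∃ m, k = lo r m) ∨ ∃ m, k = hi r m := by
  have hk := k.isLt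
  have e := pow_succ_split r
  by_cases h : k.val < 2^r
  · exact Or.inl ⟨⟨k.val, h⟩, Fin.ext rfl⟩
  · refine Or.inr ⟨⟨k.val - 2^r, by omega⟩, Fin.ext ?_⟩
    show k.val = 2^r + (k.val - 2^r)
    omega

lemma lo_inj {r : ℕ} {a b : Fin (2^r)} (h : lo r a = lo r b) : a = b := by
  apply Fin.ext; have := congrArg Fin.val h; simpa [lo] using this

lemma hi_inj {r : ℕ} {a b : Fin (2^r)} (h : hi r a = hi r b) : a = b := by
  apply Fin.ext; have := congrArg Fin.val h; simp [hi] at this; omega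

lemma lo_ne_hi {r : ℕ} (a b : Fin (2^r)) : lo r a ≠ hi r b := by
  intro h
  have := congrArg Fin.val h
  have ha := a.isLt
  simp [lo, hi] at this
  omega

lemma wt_lo {r : ℕ} (m : Fin (2^r)) : wt ((lo r m).val) = wt m.val := rfl

lemma wt_hi {r : ℕ} (m : Fin (2^r)) : wt ((hi r m).val) = wt m.val + 1 :=
  wt_two_pow_add r m.val m.isLt

variable {F : Type} [Field F]

lemma kern00 (b : F) : kern b 0 0 = 1 := rfl
lemma kern01 (b : F) : kern b 0 1 = 0 := rfl
lemma kern10 (b : F) : kern b 1 0 = b := rfl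
lemma kern11 (b : F) : kern b 1 1 = 1 := rfl

lemma polarG_succ_apply (β : ℕ → F) (r : ℕ) (i j : Fin (2^(r+1))) :
    polarG β (r+1) i j =
      kern (β (r + 1))
          ⟨i.val / 2 ^ r, Nat.div_lt_of_lt_mul (by rw [← pow_succ]; exact i.isLt)⟩
          ⟨j.val / 2 ^ r, Nat.div_lt_of_lt_mul (by rw [← pow_succ]; exact j.isLt)⟩ *
        polarG β r ⟨i.val % 2 ^ r, Nat.mod_lt _ (pow_pos (by norm_num) r)⟩
          ⟨j.val % 2 ^ r, Nat.mod_lt _ (pow_pos (by norm_num) r)⟩ := rfl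

lemma div_lo {r : ℕ} (m : Fin (2^r)) : (lo r m).val / 2^r = 0 := Nat.div_eq_of_lt m.isLt
lemma mod_lo {r : ℕ} (m : Fin (2^r)) : (lo r m).val % 2^r = m.val := Nat.mod_eq_of_lt m.isLt
lemma div_hi {r : ℕ} (m : Fin (2^r)) : (hi r m).val / 2^r = 1 := by
  show (2^r + m.val) / 2^r = 1
  rw [Nat.add_comm, Nat.add_div_right _ (pow_pos (by norm_num) r), Nat.div_eq_of_lt m.isLt]
lemma mod_hi {r : ℕ} (m : Fin (2^r)) : (hi r m).val % 2^r = m.val := by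
  show (2^r + m.val) % 2^r = m.val
  rw [Nat.add_mod_left, Nat.mod_eq_of_lt m.isLt]

lemma polarG_lo_lo (β : ℕ → F) (r : ℕ) (i j : Fin (2^r)) :
    polarG β (r+1) (lo r i) (lo r j) = polarG β r i j := by
  rw [polarG_succ_apply]
  simp only [div_lo, mod_lo, Fin.mk_zero, Fin.eta, kern00, one_mul]

lemma polarG_lo_hi (β : ℕ → F) (r : ℕ) (i j : Fin (2^r)) :
    polarG β (r+1) (lo r i) (hi r j) = 0 := by
  rw [polarG_succ_apply]
  simp only [div_lo, div_hi, Fin.mk_zero, Fin.mk_one, kern01, zero_mul]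

lemma polarG_hi_lo (β : ℕ → F) (r : ℕ) (i j : Fin (2^r)) :
    polarG β (r+1) (hi r i) (lo r j) = β (r+1) * polarG β r i j := by
  rw [polarG_succ_apply]
  simp only [div_lo, div_hi, mod_lo, mod_hi, Fin.mk_zero, Fin.mk_one, Fin.eta, kern10]

lemma polarG_hi_hi (β : ℕ → F) (r : ℕ) (i j : Fin (2^r)) :
    polarG β (r+1) (hi r i) (hi r j) = polarG β r i j := by
  rw [polarG_succ_apply]
  simp only [div_hi, mod_hi, Fin.mk_one, Fin.eta, kern11, one_mul]

lemma sum_split {M : Type*} [AddCommMonoid M] (r : ℕ) (f : Fin (2^(r+1)) → M) :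
    ∑ i, f i = (∑ i : Fin (2^r), f (lo r i)) + ∑ i : Fin (2^r), f (hi r i) := by
  rw [← Fin.sum_congr' f (pow_succ_split r).symm, Fin.sum_univ_add]
  rfl

lemma vecMul_apply' {n m : ℕ} (u : Fin n → F) (M : Matrix (Fin n) (Fin m) F) (j : Fin m) :
    Matrix.vecMul u M j = ∑ i, u i * M i j := rfl

lemma vecMul_succ_lo (β : ℕ → F) (r : ℕ) (u : Fin (2^(r+1)) → F) (j : Fin (2^r)) :
    Matrix.vecMul u (polarG β (r+1)) (lo r j) =
      Matrix.vecMul (fun m => u (lo r m) + β (r+1) * u (hi r m)) (polarG β r) j := by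
  rw [vecMul_apply', vecMul_apply', sum_split r]
  simp only [polarG_lo_lo, polarG_hi_lo]
  rw [← Finset.sum_add_distrib]
  exact Finset.sum_congr rfl fun i _ => by ring

lemma vecMul_succ_hi (β : ℕ → F) (r : ℕ) (u : Fin (2^(r+1)) → F) (j : Fin (2^r)) :
    Matrix.vecMul u (polarG β (r+1)) (hi r j) =
      Matrix.vecMul (fun m => u (hi r m)) (polarG β r) j := by
  rw [vecMul_apply', vecMul_apply', sum_split r]
  simp only [polarG_lo_hi, polarG_hi_hi, mul_zero, Finset.sum_const_zero, zero_add]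

/-- The Hamming weight of a vector. -/
noncomputable def wgt {n : ℕ} (c : Fin n → F) : ℕ :=
  (Finset.univ.filter fun j => c j ≠ 0).card

lemma wgt_split (β : ℕ → F) (r : ℕ) (u : Fin (2^(r+1)) → F) :
    wgt (Matrix.vecMul u (polarG β (r+1))) =
      wgt (Matrix.vecMul (fun m => u (lo r m) + β (r+1) * u (hi r m)) (polarG β r)) +
      wgt (Matrix.vecMul (fun m => u (hi r m)) (polarG β r)) := by
  unfold wgt
  rw [Finset.card_filter, Finset.card_filter, Finset.card_filter, sum_split r]
  congr 1
  · exact Finset.sum_congr rfl fun j _ => by rw [vecMul_succ_lo]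
  · exact Finset.sum_congr rfl fun j _ => by rw [vecMul_succ_hi]

lemma wgt_zero {n : ℕ} : wgt (0 : Fin n → F) = 0 := by
  unfold wgt
  simp

/-- Row weights: the row of `polarG` indexed by `i` (scaled by any nonzero scalar)
has Hamming weight `2 ^ wt i`. -/
lemma wgt_single (β : ℕ → F) (hβ : ∀ j, β j ≠ 0) :
    ∀ (r : ℕ) (i : Fin (2^r)) (c : F), c ≠ 0 →
      wgt (Matrix.vecMul (Pi.single i c) (polarG β r)) = 2 ^ wt i.val := by
  intro r
  induction r with
  | zero =>
    intro i c hc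
    have h1 : (2:ℕ)^0 = 1 := rfl
    have hval : i.val = 0 := by have := i.isLt; omega
    unfold wgt
    rw [show (polarG β 0) = 1 from rfl, Matrix.vecMul_one]
    have hall : ∀ j ∈ Finset.univ, (Pi.single i c : Fin (2^0) → F) j ≠ 0 := by
      intro j _
      have hji : j = i := Fin.ext (by have := j.isLt; have := i.isLt; omega)
      rw [hji, Pi.single_eq_same]; exact hc
    rw [Finset.filter_true_of_mem hall, hval]
    simp [wt]
  | succ r ih =>
    intro i c hc
    rcases lo_or_hi r i with ⟨m, rfl⟩ | ⟨m, rfl⟩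
    · rw [wgt_split]
      have h1 : (fun m' => (Pi.single (lo r m) c : Fin (2^(r+1)) → F) (lo r m') + β (r+1) * (Pi.single (lo r m) c : Fin (2^(r+1)) → F) (hi r m'))
          = Pi.single m c := by
        funext m'
        simp only [Pi.single_apply]
        have hne1 : ¬ (hi r m' = lo r m) := fun h => lo_ne_hi m m' h.symm
        rw [if_neg hne1, mul_zero, add_zero]
        by_cases h : m' = m
        · have heq : lo r m' = lo r m := by rw [h]
          rw [if_pos heq, if_pos h]
        · have hne2 : ¬ (lo r m' = lo r m) := fun hh => h (lo_inj hh)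
          rw [if_neg hne2, if_neg h]
      have h2 : (fun m' => (Pi.single (lo r m) c : Fin (2^(r+1)) → F) (hi r m')) = (0 : Fin (2^r) → F) := by
        funext m'
        simp only [Pi.single_apply]
        have hne1 : ¬ (hi r m' = lo r m) := fun h => lo_ne_hi m m' h.symm
        rw [if_neg hne1]
        simp
      rw [h1, h2, Matrix.zero_vecMul, wgt_zero, ih m c hc, wt_lo, add_zero]
    · rw [wgt_split]
      have h1 : (fun m' => (Pi.single (hi r m) c : Fin (2^(r+1)) → F) (lo r m') + β (r+1) * (Pi.single (hi r m) c : Fin (2^(r+1)) → F) (hi r m'))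
          = Pi.single m (β (r+1) * c) := by
        funext m'
        simp only [Pi.single_apply]
        have hne1 : ¬ (lo r m' = hi r m) := lo_ne_hi m' m
        rw [if_neg hne1, zero_add]
        by_cases h : m' = m
        · have heq : hi r m' = hi r m := by rw [h]
          rw [if_pos heq, if_pos h]
        · have hne2 : ¬ (hi r m' = hi r m) := fun hh => h (hi_inj hh)
          rw [if_neg hne2, if_neg h, mul_zero]
      have h2 : (fun m' => (Pi.single (hi r m) c : Fin (2^(r+1)) → F) (hi r m')) = Pi.single m c := by
        funext m'
        simp only [Pi.single_apply]
        by_cases h : m' = m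
        · have heq : hi r m' = hi r m := by rw [h]
          rw [if_pos heq, if_pos h]
        · have hne2 : ¬ (hi r m' = hi r m) := fun hh => h (hi_inj hh)
          rw [if_neg hne2, if_neg h]
      rw [h1, h2, ih m _ (mul_ne_zero (hβ (r+1)) hc), ih m c hc, wt_hi]
      rw [pow_succ]
      ring

/-- Lower bound: every nonzero message has a support index `i` with
`2 ^ wt i ≤` the Hamming weight of the codeword. -/
lemma exists_support_le (β : ℕ → F) (hβ : ∀ j, β j ≠ 0) :
    ∀ (r : ℕ) (u : Fin (2^r) → F), u ≠ 0 →
      ∃ i, u i ≠ 0 ∧ 2 ^ wt i.val ≤ wgt (Matrix.vecMul u (polarG β r)) := by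
  intro r
  induction r with
  | zero =>
    intro u hu
    obtain ⟨i, hne⟩ := Function.ne_iff.1 hu
    have hne' : u i ≠ 0 := hne
    refine ⟨i, hne', ?_⟩
    have h1 : (2:ℕ)^0 = 1 := rfl
    have hval : i.val = 0 := by have := i.isLt; omega
    have hwt : wt i.val = 0 := by rw [hval]; simp [wt]
    have h2 : (2:ℕ) ^ wt i.val = 1 := by rw [hwt]; exact h1
    rw [h2]
    unfold wgt
    rw [show (polarG β 0) = 1 from rfl, Matrix.vecMul_one]
    refine Finset.card_pos.mpr ⟨i, ?_⟩
    simp only [Finset.mem_filter, Finset.mem_univ, true_and]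
    exact hne' 
  | succ r ih =>
    intro u hu
    set b := β (r+1) with hb
    set v : Fin (2^r) → F := fun m => u (lo r m) + b * u (hi r m) with hv
    set w : Fin (2^r) → F := fun m => u (hi r m) with hw
    have hsplit : wgt (Matrix.vecMul u (polarG β (r+1))) =
        wgt (Matrix.vecMul v (polarG β r)) + wgt (Matrix.vecMul w (polarG β r)) :=
      wgt_split β r u
    by_cases hw0 : w = 0
    · have hvlo : ∀ m, v m = u (lo r m) := by
        intro m
        show u (lo r m) + b * u (hi r m) = u (lo r m)
        have hz : u (hi r m) = 0 := congrFun hw0 m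
        rw [hz, mul_zero, add_zero]
      have hv0 : v ≠ 0 := by
        intro h
        apply hu
        funext k
        rcases lo_or_hi r k with ⟨m, rfl⟩ | ⟨m, rfl⟩
        · have : v m = 0 := by rw [h]; rfl
          rw [hvlo m] at this
          exact this
        · have : w m = 0 := by rw [hw0]; rfl
          exact this
      obtain ⟨i, hi0, hle⟩ := ih v hv0
      refine ⟨lo r i, by rw [← hvlo i]; exact hi0, ?_⟩
      rw [wt_lo, hsplit]
      omega
    · obtain ⟨m, hm, hmle⟩ := ih w hw0
      by_cases hv0 : v = 0
      · refine ⟨lo r m, ?_, ?_⟩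
        · have hvm : u (lo r m) + b * u (hi r m) = 0 := congrFun hv0 m
          intro h
          rw [h, zero_add] at hvm
          exact hm ((mul_eq_zero.1 hvm).resolve_left (hβ (r+1)))
        · rw [wt_lo, hsplit]
          omega
      · obtain ⟨i, hi0, hile⟩ := ih v hv0
        by_cases hulo : u (lo r i) ≠ 0
        · refine ⟨lo r i, hulo, ?_⟩
          rw [wt_lo, hsplit]
          omega
        · push_neg at hulo
          have hwi : w i ≠ 0 := by
            intro h
            apply hi0
            show u (lo r i) + b * u (hi r i) = 0
            have hz : u (hi r i) = 0 := h
            rw [hulo, hz, mul_zero, add_zero]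
          rcases le_total (2 ^ wt i.val) (2 ^ wt m.val) with h | h
          · refine ⟨hi r i, hwi, ?_⟩
            rw [wt_hi, hsplit, pow_succ]
            have : (2:ℕ) ^ wt i.val ≤ wgt (Matrix.vecMul w (polarG β r)) := le_trans h hmle
            omega
          · refine ⟨hi r m, hm, ?_⟩
            rw [wt_hi, hsplit, pow_succ]
            have : (2:ℕ) ^ wt m.val ≤ wgt (Matrix.vecMul v (polarG β r)) := le_trans h hile
            omega

end Aux

open Classical in
/-- For a nonempty information set `A`, the minimum symbol-wise Hamming
distance of the linear code `C = { u Gₙ : u_i = 0 for i ∉ A }` equals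
`min_{i ∈ A} 2 ^ wt(i)` (zero-based indices): this value is the least element of the set of
Hamming weights of nonzero codewords of `C`. -/
theorem stmt4 {F : Type} [Field F] (β : ℕ → F) (hβ : ∀ j, β j ≠ 0) (r : ℕ)
    (A : Finset (Fin (2 ^ r))) (hA : A.Nonempty) :
    IsLeast
      {d : ℕ | ∃ u : Fin (2 ^ r) → F, (∀ i, i ∉ A → u i = 0) ∧ u ≠ 0 ∧
        d = (Finset.univ.filter fun j : Fin (2 ^ r) => Matrix.vecMul u (polarG β r) j ≠ 0).card}
      (A.inf' hA fun i => 2 ^ wt (i : ℕ)) := by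
  constructor
  · obtain ⟨i0, hi0A, hinf⟩ := Finset.exists_mem_eq_inf' hA (fun i => 2 ^ wt (i : ℕ))
    refine ⟨Pi.single i0 1, ?_, ?_, ?_⟩
    · intro i hiA
      rw [Pi.single_apply, if_neg]
      intro h; subst h; exact hiA hi0A
    · intro h
      have := congrFun h i0
      rw [Pi.single_eq_same] at this
      exact one_ne_zero this
    · rw [hinf]
      exact (wgt_single β hβ r i0 1 one_ne_zero).symm
  · rintro d ⟨u, hsupp, hu, rfl⟩
    obtain ⟨i, hui, hle⟩ := exists_support_le β hβ r u hu
    have hiA : i ∈ A := by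
      by_contra h
      exact hui (hsupp i h)
    exact le_trans (Finset.inf'_le _ hiA) hle
end

section
/- In the single-step q-ary polarization transform (inputs C_1 = V_1 + α V_2, C_2 = V_2 with V_1, V_2 independent uniform on F_q, α ≠ 0, outputs Y_1, Y_2 through two independent copies of W), the split channel mutual informations satisfy I(W') ≤ I(W''), i.e., I(V_1; Y_1 Y_2) ≤ I(V_2; Y_1 Y_2 V_1). -/
/-!
Write `C₁ = V₁ + α V₂`. In the coordinates `((C₁, Y₁), (V₂, Y₂))` the weight is the product of two
copies of the joint law of a uniform input of `W` and its output, and `V₁`, `V₂` are both uniform.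
Using `H(V₁) = H(V₂)`, the difference `I(V₂; Y₁Y₂V₁) - I(V₁; Y₁Y₂)` equals
`I(V₁; V₂ | Y₁Y₂) + I(V₂; V₁Y₁ | Y₂)`, which is nonnegative, plus
`H(V₁V₂Y₁Y₂) + H(Y₂) - H(V₂Y₁Y₂) - H(V₂Y₂)`, which vanishes by the product structure.
-/

noncomputable section

open Classical in
/-- Probability of an event under the (finitely supported) weight function `p`. -/
def probOf {Ω : Type*} [Fintype Ω] (p : Ω → ℝ) (E : Ω → Prop) : ℝ :=
  ∑ ω, if E ω then p ω else 0

/-- Shannon entropy of the random variable `X` on the finite probability space `(Ω, p)`. -/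
def entropy {Ω A : Type*} [Fintype Ω] [Fintype A] (p : Ω → ℝ) (X : Ω → A) : ℝ :=
  -∑ a : A, probOf p (fun ω => X ω = a) * Real.log (probOf p (fun ω => X ω = a))

/-- Mutual information `I(X;Y)` on the finite probability space `(Ω, p)`. -/
def mutInfo {Ω A B : Type*} [Fintype Ω] [Fintype A] [Fintype B]
    (p : Ω → ℝ) (X : Ω → A) (Y : Ω → B) : ℝ :=
  entropy p X + entropy p Y - entropy p fun ω => (X ω, Y ω)

/-- Conditional mutual information `I(X;Y∣Z)` on the finite probability space `(Ω, p)`. -/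
def condMutInfo {Ω A B C : Type*} [Fintype Ω] [Fintype A] [Fintype B] [Fintype C]
    (p : Ω → ℝ) (X : Ω → A) (Y : Ω → B) (Z : Ω → C) : ℝ :=
  (entropy p fun ω => (X ω, Z ω)) + (entropy p fun ω => (Y ω, Z ω))
    - (entropy p fun ω => (X ω, Y ω, Z ω)) - entropy p Z

/-- The symmetric capacity `I(W)` of a channel `W : F → Y → ℝ` with uniform input:
the mutual information between input and output on `F × Y` with joint weight
`(1/|F|) W(y|v)`. -/
def chanMI {F Y : Type*} [Fintype F] [Fintype Y] (W : F → Y → ℝ) : ℝ :=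
  mutInfo (fun vy : F × Y => (1 / (Fintype.card F : ℝ)) * W vy.1 vy.2) Prod.fst Prod.snd

open Finset Real

section FiniteEntropy

variable {Ω Ω' A B C : Type*} [Fintype Ω] [Fintype A] (p : Ω → ℝ)

lemma probOf_nonneg (hp : ∀ ω, 0 ≤ p ω) (E : Ω → Prop) : 0 ≤ probOf p E :=
  sum_nonneg fun ω _ => by split_ifs <;> simp [hp ω]

lemma le_probOf (hp : ∀ ω, 0 ≤ p ω) {E : Ω → Prop} {ω : Ω} (hω : E ω) : p ω ≤ probOf p E := by
  classical
  calc p ω = if E ω then p ω else 0 := (if_pos hω).symm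
    _ ≤ probOf p E :=
      single_le_sum (f := fun ω => if E ω then p ω else 0)
        (fun ω _ => by split_ifs <;> simp [hp ω]) (mem_univ ω)

lemma sum_probOf_mul (X : Ω → A) (f : A → ℝ) :
    ∑ a, probOf p (fun ω => X ω = a) * f a = ∑ ω, p ω * f (X ω) := by
  classical
  simp only [probOf, sum_mul, ite_mul, zero_mul]
  rw [sum_comm]
  exact sum_congr rfl fun ω _ => by simp

lemma sum_probOf_eq (X : Ω → A) : ∑ a, probOf p (fun ω => X ω = a) = ∑ ω, p ω := by
  simpa using sum_probOf_mul p X fun _ => 1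

lemma sum_probOf_pair_eq (X : Ω → A) (Z : Ω → C) (c : C) :
    ∑ a, probOf p (fun ω => (X ω, Z ω) = (a, c)) = probOf p (fun ω => Z ω = c) := by
  classical
  simp only [probOf, Prod.mk.injEq, ite_and]
  rw [sum_comm]
  exact sum_congr rfl fun ω _ => by simp

def fiberProb (X : Ω → A) (ω : Ω) : ℝ := probOf p fun ω' => X ω' = X ω

lemma entropy_eq_sum_fiberProb (X : Ω → A) :
    entropy p X = -∑ ω, p ω * log (fiberProb p X ω) :=
  congrArg Neg.neg (sum_probOf_mul p X fun a => log (probOf p fun ω => X ω = a))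

lemma entropy_eq_sum_negMulLog (X : Ω → A) :
    entropy p X = ∑ a, negMulLog (probOf p fun ω => X ω = a) := by
  simp only [entropy, negMulLog, neg_mul, sum_neg_distrib]

lemma entropy_congr [Fintype B] {X : Ω → A} {X' : Ω → B}
    (h : ∀ ω ω', X ω = X ω' ↔ X' ω = X' ω') :
    entropy p X = entropy p X' := by
  simp only [entropy_eq_sum_fiberProb, fiberProb]
  congr 1
  refine sum_congr rfl fun ω _ => ?_
  congr 3
  exact funext fun ω' => propext (h ω' ω)

lemma probOf_comp_equiv [Fintype Ω'] (e : Ω' ≃ Ω) (E : Ω → Prop) :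
    probOf (p ∘ e) (E ∘ e) = probOf p E := by
  classical
  exact e.sum_comp fun ω => if E ω then p ω else 0

lemma entropy_comp_equiv [Fintype Ω'] (e : Ω' ≃ Ω) (X : Ω → A) :
    entropy (p ∘ e) (X ∘ e) = entropy p X := by
  have h : ∀ a, probOf (p ∘ e) (fun ω => (X ∘ e) ω = a) = probOf p (fun ω => X ω = a) :=
    fun a => probOf_comp_equiv p e (X · = a)
  simp only [entropy, h]

lemma sum_mul_condIndepRatio_le [Fintype B] [Fintype C] (hp : ∀ ω, 0 ≤ p ω)
    (X : Ω → A) (Y : Ω → B) (Z : Ω → C) :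
    ∑ ω, p ω * (fiberProb p (fun ω => (X ω, Z ω)) ω * fiberProb p (fun ω => (Y ω, Z ω)) ω /
      (fiberProb p (fun ω => (X ω, Y ω, Z ω)) ω * fiberProb p Z ω)) ≤ ∑ ω, p ω := by
  set PXZ : A × C → ℝ := fun v => probOf p fun ω => (X ω, Z ω) = v
  set PYZ : B × C → ℝ := fun v => probOf p fun ω => (Y ω, Z ω) = v
  set PXYZ : A × B × C → ℝ := fun v => probOf p fun ω => (X ω, Y ω, Z ω) = v
  set PZ : C → ℝ := fun c => probOf p fun ω => Z ω = c
  calc _ = ∑ v, PXYZ v * (PXZ (v.1, v.2.2) * PYZ v.2 / (PXYZ v * PZ v.2.2)) :=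
        (sum_probOf_mul p (fun ω => (X ω, Y ω, Z ω)) _).symm
    _ ≤ ∑ v : A × B × C, PXZ (v.1, v.2.2) * PYZ v.2 / PZ v.2.2 := by
        refine sum_le_sum fun v _ => ?_
        obtain h | h := eq_or_ne (PXYZ v) 0
        · rw [h, zero_mul]
          exact div_nonneg (mul_nonneg (probOf_nonneg p hp _) (probOf_nonneg p hp _))
            (probOf_nonneg p hp _)
        · rw [← mul_div_assoc, mul_div_mul_left _ _ h]
    _ = ∑ c, (∑ a, PXZ (a, c)) * (∑ b, PYZ (b, c)) / PZ c := by
        simp only [Fintype.sum_prod_type, Finset.sum_mul_sum, Finset.sum_div]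
        exact (sum_congr rfl fun _ _ => sum_comm).trans sum_comm
    _ = ∑ c, PZ c := by simp only [PXZ, PYZ, PZ, sum_probOf_pair_eq, mul_self_div_self]
    _ = ∑ ω, p ω := sum_probOf_eq p Z

theorem condMutInfo_nonneg [Fintype B] [Fintype C] (hp : ∀ ω, 0 ≤ p ω)
    (X : Ω → A) (Y : Ω → B) (Z : Ω → C) : 0 ≤ condMutInfo p X Y Z := by
  set PXZ := fiberProb p fun ω => (X ω, Z ω)
  set PYZ := fiberProb p fun ω => (Y ω, Z ω)
  set PXYZ := fiberProb p fun ω => (X ω, Y ω, Z ω)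
  set PZ := fiberProb p Z
  -- Gibbs: `log x ≤ x - 1` at `x = P(XZ) P(YZ) / (P(XYZ) P(Z))`, and `∑ p x ≤ ∑ p`.
  have hlog : ∀ ω, p ω * (log (PXZ ω) + log (PYZ ω) - log (PXYZ ω) - log (PZ ω)) ≤
      p ω * (PXZ ω * PYZ ω / (PXYZ ω * PZ ω)) - p ω := by
    intro ω
    obtain h | h := (hp ω).eq_or_lt
    · simp [← h]
    have hpos : ∀ x, p ω ≤ x → 0 < x := fun x hx => h.trans_le hx
    have hXZ := hpos _ (le_probOf p hp (E := fun ω' => (X ω', Z ω') = (X ω, Z ω)) rfl)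
    have hYZ := hpos _ (le_probOf p hp (E := fun ω' => (Y ω', Z ω') = (Y ω, Z ω)) rfl)
    have hXYZ := hpos _ (le_probOf p hp (E := fun ω' => (X ω', Y ω', Z ω') = (X ω, Y ω, Z ω)) rfl)
    have hZ := hpos _ (le_probOf p hp (E := fun ω' => Z ω' = Z ω) rfl)
    have := log_le_sub_one_of_pos (div_pos (mul_pos hXZ hYZ) (mul_pos hXYZ hZ))
    rw [log_div (mul_pos hXZ hYZ).ne' (mul_pos hXYZ hZ).ne', log_mul hXZ.ne' hYZ.ne',
      log_mul hXYZ.ne' hZ.ne'] at this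
    have := mul_le_mul_of_nonneg_left this h.le
    simp only [PXZ, PYZ, PXYZ, PZ, fiberProb] at *
    linarith
  have hsum := sum_le_sum fun ω (_ : ω ∈ univ) => hlog ω
  have hmass := sum_mul_condIndepRatio_le p hp X Y Z
  rw [condMutInfo, entropy_eq_sum_fiberProb, entropy_eq_sum_fiberProb, entropy_eq_sum_fiberProb,
    entropy_eq_sum_fiberProb]
  simp only [mul_sub, mul_add, sum_sub_distrib, sum_add_distrib] at hsum
  linarith

end FiniteEntropy

section ProductWeight

variable {α β A B : Type*} [Fintype α] [Fintype β] (r : α → ℝ) (s : β → ℝ)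

def prodWeight : α × β → ℝ := fun u => r u.1 * s u.2

lemma probOf_prodWeight (E : α × β → Prop) :
    probOf (prodWeight r s) E = ∑ b, s b * probOf r fun a => E (a, b) := by
  classical
  simp only [probOf, prodWeight, Fintype.sum_prod_type_right, mul_sum]
  refine sum_congr rfl fun b _ => sum_congr rfl fun a _ => ?_
  split_ifs <;> ring

lemma probOf_prodWeight_and (E : α → Prop) (E' : β → Prop) :
    probOf (prodWeight r s) (fun u => E u.1 ∧ E' u.2) = probOf r E * probOf s E' := by
  classical
  simp only [probOf, prodWeight, Fintype.sum_prod_type, Fintype.sum_mul_sum]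
  refine sum_congr rfl fun a _ => sum_congr rfl fun b _ => ?_
  split_ifs <;> simp_all

lemma probOf_prodWeight_snd (hr : ∑ a, r a = 1) (E : β → Prop) :
    probOf (prodWeight r s) (fun u => E u.2) = probOf s E := by
  have h := probOf_prodWeight_and r s (fun _ => True) E
  simp only [true_and] at h
  rw [h]
  simp [probOf, hr]

lemma entropy_prodWeight_snd [Fintype B] (hr : ∑ a, r a = 1) (Y : β → B) :
    entropy (prodWeight r s) (fun u => Y u.2) = entropy s Y := by
  have h : ∀ y, probOf (prodWeight r s) (fun u => Y u.2 = y) = probOf s fun b => Y b = y :=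
    fun y => probOf_prodWeight_snd r s hr (Y · = y)
  simp only [entropy, h]

lemma entropy_prodWeight [Fintype A] [Fintype B] (hr : ∑ a, r a = 1) (hs : ∑ b, s b = 1)
    (X : α → A) (Y : β → B) :
    entropy (prodWeight r s) (fun u => (X u.1, Y u.2)) = entropy r X + entropy s Y := by
  have hlaw : ∀ v : A × B, probOf (prodWeight r s) (fun u => (X u.1, Y u.2) = v) =
      (probOf r fun a => X a = v.1) * probOf s fun b => Y b = v.2 := fun v => by
    simpa only [Prod.ext_iff] using probOf_prodWeight_and r s (fun a => X a = v.1) (Y · = v.2)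
  simp only [entropy_eq_sum_negMulLog, hlaw, negMulLog_mul, Fintype.sum_prod_type,
    sum_add_distrib, ← mul_sum, ← sum_mul, sum_probOf_eq, hr, hs]
  ring

end ProductWeight

section Polarization

variable {F Y : Type*} [Ring F] [Fintype F] (W : F → Y → ℝ)

def channelWeight : F × Y → ℝ := fun cy => (1 / (Fintype.card F : ℝ)) * W cy.1 cy.2

def polarWeight (α : F) : F × F × Y × Y → ℝ := fun z =>
  (1 / (Fintype.card F : ℝ)) * (1 / (Fintype.card F : ℝ)) * W (z.1 + α * z.2.1) z.2.2.1 *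
    W z.2.1 z.2.2.2

lemma polarWeight_nonneg (hW0 : ∀ c y, 0 ≤ W c y) (α : F) (z : F × F × Y × Y) :
    0 ≤ polarWeight W α z := by
  unfold polarWeight
  have := hW0 (z.1 + α * z.2.1) z.2.2.1
  have := hW0 z.2.1 z.2.2.2
  positivity

omit [Ring F] in
lemma probOf_channelWeight_fst [Fintype Y] (hW1 : ∀ c, ∑ y, W c y = 1) (c : F) :
    probOf (channelWeight W) (fun cy => cy.1 = c) = 1 / (Fintype.card F : ℝ) := by
  classical
  simp [probOf, channelWeight, Fintype.sum_prod_type, ← mul_sum, hW1]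

omit [Ring F] in
lemma sum_channelWeight [Nonempty F] [Fintype Y] (hW1 : ∀ c, ∑ y, W c y = 1) :
    ∑ cy, channelWeight W cy = 1 := by
  rw [← sum_probOf_eq _ Prod.fst]
  simp [probOf_channelWeight_fst W hW1, Fintype.card_ne_zero]

-- `((C₁, Y₁), (C₂, Y₂)) ↦ (V₁, V₂, Y₁, Y₂)`
def polarEquiv (α : F) : (F × Y) × (F × Y) ≃ F × F × Y × Y where
  toFun u := (u.1.1 - α * u.2.1, u.2.1, u.1.2, u.2.2)
  invFun z := ((z.1 + α * z.2.1, z.2.2.1), (z.2.1, z.2.2.2))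
  left_inv u := by simp
  right_inv z := by simp

lemma polarWeight_comp_polarEquiv (α : F) :
    polarWeight W α ∘ polarEquiv α = prodWeight (channelWeight W) (channelWeight W) := by
  funext u
  simp only [polarEquiv, Equiv.coe_fn_mk, Function.comp_apply, polarWeight, sub_add_cancel,
    prodWeight, channelWeight]
  ring

lemma entropy_polarWeight_eq_prodWeight [Fintype Y] {A : Type*} [Fintype A] (α : F)
    (X : F × F × Y × Y → A) :
    entropy (polarWeight W α) X =
      entropy (prodWeight (channelWeight W) (channelWeight W)) (X ∘ polarEquiv α) := by
  rw [← polarWeight_comp_polarEquiv, entropy_comp_equiv]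

lemma entropy_polarWeight_input_eq [Fintype Y] (hW1 : ∀ c, ∑ y, W c y = 1) (α : F) :
    entropy (polarWeight W α) (fun z => z.1) = entropy (polarWeight W α) fun z => z.2.1 := by
  have hV₁ : ∀ x, probOf (polarWeight W α) (fun z => z.1 = x) = 1 / (Fintype.card F : ℝ) := by
    intro x
    rw [← probOf_comp_equiv _ (polarEquiv α), polarWeight_comp_polarEquiv]
    change probOf (prodWeight (channelWeight W) (channelWeight W))
      (fun u => u.1.1 - α * u.2.1 = x) = _
    simp only [probOf_prodWeight, sub_eq_iff_eq_add, probOf_channelWeight_fst W hW1, ← sum_mul,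
      sum_channelWeight W hW1, one_mul]
  have hV₂ : ∀ x, probOf (polarWeight W α) (fun z => z.2.1 = x) = 1 / (Fintype.card F : ℝ) := by
    intro x
    rw [← probOf_comp_equiv _ (polarEquiv α), polarWeight_comp_polarEquiv]
    exact (probOf_prodWeight_snd _ _ (sum_channelWeight W hW1) fun cy : F × Y => cy.1 = x).trans
      (probOf_channelWeight_fst W hW1 x)
  simp only [entropy, hV₁, hV₂]

lemma entropy_polarWeight_identity [Fintype Y] (hW1 : ∀ c, ∑ y, W c y = 1) (α : F) :
    entropy (polarWeight W α) (fun z => z) + entropy (polarWeight W α) (fun z => z.2.2.2) =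
      entropy (polarWeight W α) (fun z => (z.2.1, z.2.2.1, z.2.2.2)) +
        entropy (polarWeight W α) fun z => (z.2.1, z.2.2.2) := by
  set g := channelWeight W
  have hg := sum_channelWeight W hW1
  have hω : entropy (polarWeight W α) (fun z => z) = entropy g id + entropy g id :=
    (entropy_polarWeight_eq_prodWeight W α _).trans <|
      (entropy_congr _ fun u u' => (polarEquiv α).injective.eq_iff).trans
        (entropy_prodWeight g g hg hg id id)
  have hY₂ : entropy (polarWeight W α) (fun z => z.2.2.2) = entropy g Prod.snd :=
    (entropy_polarWeight_eq_prodWeight W α _).trans (entropy_prodWeight_snd g g hg Prod.snd)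
  have hV₂Y : entropy (polarWeight W α) (fun z => (z.2.1, z.2.2.1, z.2.2.2)) =
      entropy g Prod.snd + entropy g id :=
    (entropy_polarWeight_eq_prodWeight W α _).trans <|
      (entropy_congr _ fun u u' => by
        simp only [polarEquiv, Equiv.coe_fn_mk, Function.comp_apply, Prod.ext_iff]; tauto).trans
        (entropy_prodWeight g g hg hg Prod.snd id)
  have hV₂Y₂ : entropy (polarWeight W α) (fun z => (z.2.1, z.2.2.2)) = entropy g id :=
    (entropy_polarWeight_eq_prodWeight W α _).trans (entropy_prodWeight_snd g g hg id)
  linarith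

end Polarization

theorem stmt7_general {F Y : Type} [Field F] [Fintype F] [Fintype Y]
    (W : F → Y → ℝ) (hW0 : ∀ c y, 0 ≤ W c y) (hW1 : ∀ c, ∑ y, W c y = 1)
    (α : F) :
    letI q : ℝ := (Fintype.card F : ℝ)
    letI p : F × F × Y × Y → ℝ :=
      fun z => (1 / q) * (1 / q) * W (z.1 + α * z.2.1) z.2.2.1 * W z.2.1 z.2.2.2
    mutInfo p (fun z => z.1) (fun z => (z.2.2.1, z.2.2.2)) ≤
      mutInfo p (fun z => z.2.1) (fun z => (z.2.2.1, z.2.2.2, z.1)) := by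
  change mutInfo (polarWeight W α) _ _ ≤ mutInfo (polarWeight W α) _ _
  set p := polarWeight W α
  have hp := polarWeight_nonneg W hW0 α
  have hA := condMutInfo_nonneg p hp (fun z => z.1) (fun z => z.2.1) fun z => (z.2.2.1, z.2.2.2)
  have hB := condMutInfo_nonneg p hp (fun z => z.2.1) (fun z => (z.1, z.2.2.1)) fun z => z.2.2.2
  have hV := entropy_polarWeight_input_eq W hW1 α
  have hH := entropy_polarWeight_identity W hW1 α
  have hYV₁ : entropy p (fun z => (z.2.2.1, z.2.2.2, z.1)) =
      entropy p fun z => (z.1, z.2.2.1, z.2.2.2) :=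
    entropy_congr p fun _ _ => by simp only [Prod.ext_iff]; tauto
  have hV₁Y₁Y₂ : entropy p (fun z => ((z.1, z.2.2.1), z.2.2.2)) =
      entropy p fun z => (z.1, z.2.2.1, z.2.2.2) :=
    entropy_congr p fun _ _ => by simp only [Prod.ext_iff]; tauto
  have hV₂YV₁ : entropy p (fun z => (z.2.1, z.2.2.1, z.2.2.2, z.1)) = entropy p fun z => z :=
    entropy_congr p fun _ _ => by simp only [Prod.ext_iff]; tauto
  have hV₂V₁Y₁Y₂ : entropy p (fun z => (z.2.1, (z.1, z.2.2.1), z.2.2.2)) = entropy p fun z => z :=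
    entropy_congr p fun _ _ => by simp only [Prod.ext_iff]; tauto
  simp only [mutInfo, condMutInfo] at hA hB ⊢
  linarith

/-- In the single-step `q`-ary polarization transform (inputs
`C₁ = V₁ + α V₂`, `C₂ = V₂` with `V₁, V₂` independent uniform on `F_q`, `α ≠ 0`, outputs
`Y₁, Y₂` through two independent copies of `W`), the split-channel mutual informations
satisfy `I(W') ≤ I(W'')`, i.e. `I(V₁; Y₁Y₂) ≤ I(V₂; Y₁Y₂V₁)`. -/
theorem stmt7 {F Y : Type} [Field F] [Fintype F] [Fintype Y]
    (W : F → Y → ℝ) (hW0 : ∀ c y, 0 ≤ W c y) (hW1 : ∀ c, ∑ y, W c y = 1)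
    (α : F) (hα : α ≠ 0) :
    letI q : ℝ := (Fintype.card F : ℝ)
    letI p : F × F × Y × Y → ℝ :=
      fun z => (1 / q) * (1 / q) * W (z.1 + α * z.2.1) z.2.2.1 * W z.2.1 z.2.2.2
    mutInfo p (fun z => z.1) (fun z => (z.2.2.1, z.2.2.2)) ≤
      mutInfo p (fun z => z.2.1) (fun z => (z.2.2.1, z.2.2.2, z.1)) :=
  stmt7_general W hW0 hW1 α
end
end
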